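/- Let Γ be a group acting on the right on a complex vector space V via operators |γ, let v be a multiplier-system twist, and let F be an automorphic form, i.e. F|γ = F for all γ ∈ Γ. Fix z₀ ∈ ℍ and define ψ_γ(t) = ∫_{γ^{-1}z₀}^{z₀} (z-t)^{r-2} F(z) dz (path in ℍ, branch as above, action |_{v,2-r}). Then ψ satisfies the cocycle relation ψ_{γδ} = ψ_γ|_{v,2-r} δ + ψ_δ for all γ, δ ∈ Γ, and a change of the base point z₀ to z₁ changes ψ by the coboundary γ ↦ b|_{v,2-r}(γ - 1) with b(t) = ∫_{z₀}^{z₁} (z-t)^{r-2} F(z) dz. -/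

import Mathlib

/-!
For `t` in the lower half-plane the kernel `z ↦ (z - t)^(r-2) F z` is holomorphic on the convex
upper half-plane, so it has a primitive there; segment integrals are therefore additive, and both
identities reduce to the single substitution `z ↦ γ⁻¹ z`. Since
`γ w - γ t = (w - t) / ((c w + d) (c t + d))` and `F` is automorphic, this substitution turns the
kernel for `t` into `v(γ)⁻¹ (c t + d)^(r-2)` times the kernel for `γ t`. Splitting the power of
that quotient needs no `2πi` correction exactly because `c t + d` is taken with
`arg ∈ [-π, π)`: then `arg (c w + d) + arg (c t + d)` lies in `(-π, π)`.
-/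

open Complex

/-- Lower row of the Möbius action: `cz + d`. -/
noncomputable def mdenom (g : Matrix.SpecialLinearGroup (Fin 2) ℝ) (z : ℂ) : ℂ :=
  (g.1 1 0 : ℂ) * z + (g.1 1 1 : ℂ)

/-- Möbius action of `SL₂(ℝ)` on ℂ: `(az+b)/(cz+d)`. -/
noncomputable def mact (g : Matrix.SpecialLinearGroup (Fin 2) ℝ) (z : ℂ) : ℂ :=
  ((g.1 0 0 : ℂ) * z + (g.1 0 1 : ℂ)) / mdenom g z

/-- Complex power with the branch `arg ∈ [-π, π)`. -/
noncomputable def cpowLHP (w s : ℂ) : ℂ :=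
  if w.arg = Real.pi then Complex.exp (s * (Complex.log w - 2 * (Real.pi : ℂ) * Complex.I))
  else w ^ s

/-- The integral `∫_{w₁}^{w₂} (z - t)^(r-2) F z dz` along the straight segment from
`w₁` to `w₂` (in ℍ the integral is path independent since the integrand is
holomorphic). -/
noncomputable def segInt (r : ℂ) (F : ℂ → ℂ) (w₁ w₂ t : ℂ) : ℂ :=
  ∫ s in (0:ℝ)..1,
    (w₂ - w₁) * ((w₁ + (s : ℂ) * (w₂ - w₁) - t) ^ (r - 2)) *
      F (w₁ + (s : ℂ) * (w₂ - w₁))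

namespace Matrix.SpecialLinearGroup

variable (g h : SpecialLinearGroup (Fin 2) ℝ)

lemma det_coe_complex : (g.1 0 0 : ℂ) * g.1 1 1 - (g.1 0 1 : ℂ) * g.1 1 0 = 1 := by
  have h := g.det_coe
  rw [Matrix.det_fin_two] at h
  exact_mod_cast h

lemma coe_mul_apply_complex (i j : Fin 2) :
    ((g * h).1 i j : ℂ) = (g.1 i 0 : ℂ) * h.1 0 j + (g.1 i 1 : ℂ) * h.1 1 j := by
  rw [coe_mul, Matrix.mul_apply, Fin.sum_univ_two]
  push_cast
  ring

end Matrix.SpecialLinearGroup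

open Matrix.SpecialLinearGroup

section Mobius

variable (g h : Matrix.SpecialLinearGroup (Fin 2) ℝ) {z w : ℂ}

lemma im_mdenom : (mdenom g z).im = g.1 1 0 * z.im := by
  simp [mdenom]

lemma mdenom_ne_zero (hz : z.im ≠ 0) : mdenom g z ≠ 0 := by
  intro h0
  have hc : g.1 1 0 = 0 := by
    simpa [hz, h0] using (im_mdenom g (z := z)).symm
  have hd : mdenom g z = (g.1 1 1 : ℂ) := by simp [mdenom, hc]
  have hdet := g.det_coe
  rw [Matrix.det_fin_two, hc] at hdet
  have : g.1 1 1 = 0 := by exact_mod_cast hd.symm.trans h0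
  simp [this] at hdet

lemma im_mact : (mact g z).im = z.im / normSq (mdenom g z) := by
  rw [mact, div_im, div_sub_div_same]
  congr 1
  have hdet := g.det_coe
  rw [Matrix.det_fin_two] at hdet
  simp only [mdenom, add_re, add_im, mul_re, mul_im, ofReal_re, ofReal_im]
  linear_combination z.im * hdet

lemma im_mact_pos (hz : 0 < z.im) : 0 < (mact g z).im := by
  rw [im_mact]
  exact div_pos hz (normSq_pos.2 (mdenom_ne_zero g hz.ne'))

lemma im_mact_neg (hz : z.im < 0) : (mact g z).im < 0 := by
  rw [im_mact]
  exact div_neg_of_neg_of_pos hz (normSq_pos.2 (mdenom_ne_zero g hz.ne))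

lemma im_mact_sub_mact_pos (hw : 0 < w.im) (hz : z.im < 0) : 0 < (mact g w - mact g z).im := by
  rw [sub_im]
  linarith [im_mact_pos g hw, im_mact_neg g hz]

lemma mdenom_mul (hz : mdenom h z ≠ 0) :
    mdenom (g * h) z = mdenom g (mact h z) * mdenom h z := by
  simp only [mdenom, mact, coe_mul_apply_complex] at hz ⊢
  field_simp
  ring

lemma mact_mul (hz : mdenom h z ≠ 0) :
    mact (g * h) z = mact g (mact h z) := by
  rw [mact, mact, mdenom_mul g h hz]
  simp only [mact, mdenom, coe_mul_apply_complex] at hz ⊢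
  field_simp
  ring

lemma mact_inv_mact (hz : mdenom g z ≠ 0) : mact g⁻¹ (mact g z) = z := by
  rw [← mact_mul g⁻¹ g hz, inv_mul_cancel]
  simp [mact, mdenom]

lemma mdenom_inv_mact (hz : mdenom g z ≠ 0) : mdenom g⁻¹ (mact g z) * mdenom g z = 1 := by
  rw [← mdenom_mul g⁻¹ g hz, inv_mul_cancel]
  simp [mdenom]

lemma mact_sub_mact (hw : mdenom g w ≠ 0) (hz : mdenom g z ≠ 0) :
    mact g w - mact g z = (w - z) / (mdenom g w * mdenom g z) := by
  rw [mact, mact, div_sub_div _ _ hw hz]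
  congr 1
  simp only [mdenom]
  linear_combination (w - z) * det_coe_complex g

lemma hasDerivAt_mact (hz : mdenom g z ≠ 0) :
    HasDerivAt (mact g) ((mdenom g z ^ 2)⁻¹) z := by
  have hnum : HasDerivAt (fun z : ℂ => (g.1 0 0 : ℂ) * z + g.1 0 1) (g.1 0 0 : ℂ) z := by
    simpa using ((hasDerivAt_id z).const_mul (g.1 0 0 : ℂ)).add_const (g.1 0 1 : ℂ)
  have hden : HasDerivAt (fun z : ℂ => (g.1 1 0 : ℂ) * z + g.1 1 1) (g.1 1 0 : ℂ) z := by
    simpa using ((hasDerivAt_id z).const_mul (g.1 1 0 : ℂ)).add_const (g.1 1 1 : ℂ)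
  refine (hnum.div hden hz).congr_deriv ?_
  rw [inv_eq_one_div]
  congr 1
  linear_combination det_coe_complex g

end Mobius

section Branch

open scoped Real

/-- The logarithm with imaginary part in `[-π, π)`, the branch underlying `cpowLHP`. -/
noncomputable def logLHP (w : ℂ) : ℂ :=
  if w.arg = π then log w - 2 * π * I else log w

variable {w : ℂ}

lemma exp_logLHP (hw : w ≠ 0) : exp (logLHP w) = w := by
  unfold logLHP
  split_ifs
  · rw [Complex.exp_sub, exp_log hw, exp_two_pi_mul_I, div_one]
  · exact exp_log hw

lemma cpowLHP_eq_exp_mul_logLHP (hw : w ≠ 0) (s : ℂ) : cpowLHP w s = exp (s * logLHP w) := by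
  unfold cpowLHP logLHP
  split_ifs
  · rfl
  · rw [cpow_def_of_ne_zero hw, mul_comm]

lemma logLHP_of_im_ne_zero (hw : w.im ≠ 0) : logLHP w = log w := by
  rw [logLHP, if_neg]
  exact fun h => hw (arg_eq_pi_iff.1 h).2

lemma im_logLHP_of_neg {x : ℝ} (hx : x < 0) : (logLHP x).im = -π := by
  rw [logLHP, if_pos (arg_ofReal_of_neg hx), sub_im, log_im, arg_ofReal_of_neg hx,
    show (2 * π * I : ℂ).im = 2 * π by simp]
  ring

lemma arg_mem_Ioo_of_im_pos (hw : 0 < w.im) : w.arg ∈ Set.Ioo 0 π :=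
  ⟨(arg_nonneg_iff.2 hw.le).lt_of_ne fun h => hw.ne' (arg_eq_zero_iff.1 h.symm).2,
    arg_lt_pi_iff.2 (Or.inr hw.ne')⟩

lemma abs_arg_add_arg_lt_pi_of_im_mul_neg {A B : ℂ} (h : A.im * B.im < 0) :
    |A.arg + B.arg| < π := by
  wlog hA : A.im < 0 generalizing A B
  · rw [add_comm]
    exact this (by linarith) (neg_of_mul_neg_right h (not_lt.1 hA))
  have hB := arg_mem_Ioo_of_im_pos (pos_of_mul_neg_right h hA.le)
  have := arg_neg_iff.2 hA
  have := neg_pi_lt_arg A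
  rw [abs_lt]; constructor <;> linarith [hB.1, hB.2]

lemma arg_add_im_logLHP_ofReal {x : ℝ} (hx : x ≠ 0) : (x : ℂ).arg + (logLHP x).im = 0 := by
  rcases hx.lt_or_gt with hx | hx
  · rw [arg_ofReal_of_neg hx, im_logLHP_of_neg hx, add_neg_cancel]
  · have h0 := arg_ofReal_of_nonneg hx.le
    rw [logLHP, if_neg (by rw [h0]; exact Real.pi_ne_zero.symm), log_im, h0, add_zero]

lemma abs_arg_mdenom_add_im_logLHP_lt_pi (g : Matrix.SpecialLinearGroup (Fin 2) ℝ) {t : ℂ}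
    (hw : 0 < w.im) (ht : t.im < 0) :
    |(mdenom g w).arg + (logLHP (mdenom g t)).im| < π := by
  by_cases hc : g.1 1 0 = 0
  · have hd : ∀ z, mdenom g z = (g.1 1 1 : ℂ) := by simp [mdenom, hc]
    have hd0 : g.1 1 1 ≠ 0 := by exact_mod_cast hd w ▸ mdenom_ne_zero g hw.ne'
    rw [hd, hd, arg_add_im_logLHP_ofReal hd0, abs_zero]
    exact Real.pi_pos
  · have hB : (mdenom g t).im ≠ 0 := by rw [im_mdenom]; exact mul_ne_zero hc ht.ne
    rw [logLHP_of_im_ne_zero hB, log_im]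
    apply abs_arg_add_arg_lt_pi_of_im_mul_neg
    rw [im_mdenom, im_mdenom]
    nlinarith [mul_pos (mul_self_pos.2 hc) (mul_pos_of_neg_of_neg (neg_neg_of_pos hw) ht)]

lemma eq_of_exp_eq_of_abs_im_sub_lt {u v : ℂ} (h : exp u = exp v)
    (him : |u.im - v.im| < 2 * π) : u = v := by
  obtain ⟨n, rfl⟩ := exp_eq_exp_iff_exists_int.1 h
  have hn : |(n : ℝ)| < 1 := by
    have : (v + n * (2 * π * I)).im - v.im = n * (2 * π) := by simp
    rw [this, abs_mul, abs_of_pos Real.two_pi_pos] at him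
    nlinarith [Real.two_pi_pos]
  have : n = 0 := by
    rw [← Int.cast_abs] at hn
    exact Int.abs_lt_one_iff.1 (by exact_mod_cast hn)
  simp [this]

variable (g : Matrix.SpecialLinearGroup (Fin 2) ℝ) {t : ℂ}

lemma log_mact_sub_mact (hw : 0 < w.im) (ht : t.im < 0) :
    log (mact g w - mact g t) = log (w - t) - log (mdenom g w) - logLHP (mdenom g t) := by
  have hA := mdenom_ne_zero g hw.ne'
  have hB := mdenom_ne_zero g ht.ne
  have hwt : 0 < (w - t).im := by rw [sub_im]; linarith
  have hq := im_mact_sub_mact_pos g hw ht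
  apply eq_of_exp_eq_of_abs_im_sub_lt
  · rw [exp_log (ne_of_apply_ne im hq.ne'), Complex.exp_sub, Complex.exp_sub,
      exp_log (ne_of_apply_ne im hwt.ne'), exp_log hA, exp_logLHP hB, mact_sub_mact g hA hB,
      div_div]
  · have hS := abs_lt.1 (abs_arg_mdenom_add_im_logLHP_lt_pi g hw ht)
    have h1 := arg_mem_Ioo_of_im_pos hq
    have h2 := arg_mem_Ioo_of_im_pos hwt
    simp only [sub_im, log_im]
    rw [abs_lt]; constructor <;> linarith [h1.1, h1.2, h2.1, h2.2]

lemma cpow_mact_sub_mact (hw : 0 < w.im) (ht : t.im < 0) (s : ℂ) :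
    (mact g w - mact g t) ^ s =
      (w - t) ^ s * (mdenom g w ^ s)⁻¹ * (cpowLHP (mdenom g t) s)⁻¹ := by
  have hwt : 0 < (w - t).im := by rw [sub_im]; linarith
  have hq := im_mact_sub_mact_pos g hw ht
  rw [cpow_def_of_ne_zero (ne_of_apply_ne im hq.ne'),
    cpow_def_of_ne_zero (ne_of_apply_ne im hwt.ne'), cpow_def_of_ne_zero (mdenom_ne_zero g hw.ne'),
    cpowLHP_eq_exp_mul_logLHP (mdenom_ne_zero g ht.ne), log_mact_sub_mact g hw ht,
    ← Complex.exp_neg, ← Complex.exp_neg, ← Complex.exp_add, ← Complex.exp_add]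
  ring_nf

end Branch

lemma Convex.exists_forall_hasDerivAt_of_isOpen {E : Type*} [NormedAddCommGroup E]
    [NormedSpace ℂ E] [CompleteSpace E] {s : Set ℂ} {f : ℂ → E} (hs : Convex ℝ s)
    (hso : IsOpen s) (hf : DifferentiableOn ℂ f s) :
    ∃ G : ℂ → E, ∀ z ∈ s, HasDerivAt G (f z) z := by
  obtain ⟨G, hG⟩ := hs.exists_forall_hasDerivWithinAt hf
  exact ⟨G, fun z hz => (hG z hz).hasDerivAt (hso.mem_nhds hz)⟩

lemma Convex.integral_segment_eq_sub_of_hasDerivAt {s : Set ℂ} (hs : Convex ℝ s) {G g : ℂ → ℂ}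
    (hG : ∀ z ∈ s, HasDerivAt G (g z) z) (hg : ContinuousOn g s) {w₁ w₂ : ℂ}
    (h₁ : w₁ ∈ s) (h₂ : w₂ ∈ s) :
    ∫ u in (0:ℝ)..1, (w₂ - w₁) * g (w₁ + u * (w₂ - w₁)) = G w₂ - G w₁ := by
  have hmem : ∀ u ∈ Set.uIcc (0:ℝ) 1, w₁ + u * (w₂ - w₁) ∈ s := fun u hu => by
    rw [Set.uIcc_of_le zero_le_one] at hu
    simpa [Complex.real_smul] using hs.add_smul_sub_mem h₁ h₂ hu
  have hline (y : ℂ) : HasDerivAt (fun y : ℂ => w₁ + y * (w₂ - w₁)) (w₂ - w₁) y := by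
    simpa using ((hasDerivAt_id y).mul_const (w₂ - w₁)).const_add w₁
  have hderiv : ∀ u ∈ Set.uIcc (0:ℝ) 1, HasDerivAt (fun u : ℝ => G (w₁ + u * (w₂ - w₁)))
      ((w₂ - w₁) * g (w₁ + u * (w₂ - w₁))) u := fun u hu => by
    simpa [mul_comm] using ((hG _ (hmem u hu)).comp (u : ℂ) (hline u)).comp_ofReal
  have hint : IntervalIntegrable (fun u : ℝ => (w₂ - w₁) * g (w₁ + u * (w₂ - w₁)))
      MeasureTheory.volume 0 1 :=
    (continuousOn_const.mul (hg.comp (by fun_prop) hmem)).intervalIntegrable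
  simp [intervalIntegral.integral_eq_sub_of_hasDerivAt hderiv hint]

noncomputable def eichlerIntegrand (r : ℂ) (F : ℂ → ℂ) (t z : ℂ) : ℂ :=
  (z - t) ^ (r - 2) * F z

section SegmentIntegral

variable {r t : ℂ} {F : ℂ → ℂ}

lemma differentiableOn_eichlerIntegrand (hF : DifferentiableOn ℂ F {z : ℂ | 0 < z.im})
    (ht : t.im < 0) : DifferentiableOn ℂ (eichlerIntegrand r F t) {z : ℂ | 0 < z.im} := by
  refine DifferentiableOn.mul (fun z hz => ?_) hF
  have hslit : z - t ∈ slitPlane := by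
    rw [mem_slitPlane_iff, sub_im]
    exact Or.inr (by linarith [show 0 < z.im from hz])
  exact ((differentiableAt_id.sub_const t).cpow (differentiableAt_const _)
    hslit).differentiableWithinAt

lemma exists_primitive_eichlerIntegrand (hF : DifferentiableOn ℂ F {z : ℂ | 0 < z.im})
    (ht : t.im < 0) :
    ∃ G : ℂ → ℂ, ∀ z ∈ {z : ℂ | 0 < z.im}, HasDerivAt G (eichlerIntegrand r F t z) z :=
  (convex_halfSpace_im_gt 0).exists_forall_hasDerivAt_of_isOpen
    (isOpen_lt continuous_const continuous_im) (differentiableOn_eichlerIntegrand hF ht)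

lemma segInt_eq_integral (w₁ w₂ : ℂ) :
    segInt r F w₁ w₂ t =
      ∫ u in (0:ℝ)..1, (w₂ - w₁) * eichlerIntegrand r F t (w₁ + u * (w₂ - w₁)) := by
  simp only [segInt, eichlerIntegrand, mul_assoc]

lemma segInt_eq_sub_of_hasDerivAt (hF : DifferentiableOn ℂ F {z : ℂ | 0 < z.im})
    (ht : t.im < 0) {G : ℂ → ℂ}
    (hG : ∀ z ∈ {z : ℂ | 0 < z.im}, HasDerivAt G (eichlerIntegrand r F t z) z) {w₁ w₂ : ℂ}
    (h₁ : 0 < w₁.im) (h₂ : 0 < w₂.im) : segInt r F w₁ w₂ t = G w₂ - G w₁ := by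
  rw [segInt_eq_integral]
  exact (convex_halfSpace_im_gt 0).integral_segment_eq_sub_of_hasDerivAt hG
    (differentiableOn_eichlerIntegrand hF ht).continuousOn h₁ h₂

lemma segInt_add (hF : DifferentiableOn ℂ F {z : ℂ | 0 < z.im}) (ht : t.im < 0) {w₁ w₂ w₃ : ℂ}
    (h₁ : 0 < w₁.im) (h₂ : 0 < w₂.im) (h₃ : 0 < w₃.im) :
    segInt r F w₁ w₃ t = segInt r F w₁ w₂ t + segInt r F w₂ w₃ t := by
  obtain ⟨G, hG⟩ := exists_primitive_eichlerIntegrand (r := r) hF ht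
  rw [segInt_eq_sub_of_hasDerivAt hF ht hG h₁ h₃, segInt_eq_sub_of_hasDerivAt hF ht hG h₁ h₂,
    segInt_eq_sub_of_hasDerivAt hF ht hG h₂ h₃]
  ring

end SegmentIntegral

section Transformation

variable (γ : Matrix.SpecialLinearGroup (Fin 2) ℝ) {v r t : ℂ} {F : ℂ → ℂ}

lemma eichlerIntegrand_mact_inv_mul (hv : v ≠ 0)
    (hFγ : ∀ z : ℂ, 0 < z.im → F (mact γ z) = v * mdenom γ z ^ r * F z)
    {z : ℂ} (hz : 0 < z.im) (ht : t.im < 0) :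
    eichlerIntegrand r F t (mact γ⁻¹ z) * (mdenom γ⁻¹ z ^ 2)⁻¹ =
      v⁻¹ * cpowLHP (mdenom γ t) (r - 2) * eichlerIntegrand r F (mact γ t) z := by
  obtain ⟨w, hw, rfl⟩ : ∃ w, 0 < w.im ∧ mact γ w = z :=
    ⟨mact γ⁻¹ z, im_mact_pos _ hz, by simpa using mact_inv_mact γ⁻¹ (mdenom_ne_zero _ hz.ne')⟩
  have hA := mdenom_ne_zero γ hw.ne'
  have hden : mdenom γ⁻¹ (mact γ w) = (mdenom γ w)⁻¹ :=
    eq_inv_of_mul_eq_one_left (mdenom_inv_mact γ hA)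
  have hpow : mdenom γ w ^ r = mdenom γ w ^ (r - 2) * mdenom γ w ^ 2 := by
    rw [← cpow_natCast, ← cpow_add _ _ hA]; push_cast; ring_nf
  simp only [eichlerIntegrand]
  rw [mact_inv_mact γ hA, hden, hFγ w hw, cpow_mact_sub_mact γ hw ht, hpow]
  have hAr : mdenom γ w ^ (r - 2) ≠ 0 := cpow_ne_zero_iff.2 (Or.inl hA)
  have hB : cpowLHP (mdenom γ t) (r - 2) ≠ 0 := by
    rw [cpowLHP_eq_exp_mul_logLHP (mdenom_ne_zero γ ht.ne)]; exact exp_ne_zero _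
  field_simp

lemma segInt_mact_inv (hv : v ≠ 0) (hF : DifferentiableOn ℂ F {z : ℂ | 0 < z.im})
    (hFγ : ∀ z : ℂ, 0 < z.im → F (mact γ z) = v * mdenom γ z ^ r * F z)
    {w₁ w₂ : ℂ} (h₁ : 0 < w₁.im) (h₂ : 0 < w₂.im) (ht : t.im < 0) :
    segInt r F (mact γ⁻¹ w₁) (mact γ⁻¹ w₂) t =
      v⁻¹ * cpowLHP (mdenom γ t) (r - 2) * segInt r F w₁ w₂ (mact γ t) := by
  obtain ⟨G, hG⟩ := exists_primitive_eichlerIntegrand (r := r) hF ht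
  have hGγ : ∀ z ∈ {z : ℂ | 0 < z.im}, HasDerivAt (G ∘ mact γ⁻¹)
      (v⁻¹ * cpowLHP (mdenom γ t) (r - 2) * eichlerIntegrand r F (mact γ t) z) z := by
    intro z hz
    rw [← eichlerIntegrand_mact_inv_mul γ hv hFγ hz ht]
    exact (hG _ (im_mact_pos _ hz)).comp z (hasDerivAt_mact _ (mdenom_ne_zero _ hz.ne'))
  have hcont := (continuousOn_const (c := v⁻¹ * cpowLHP (mdenom γ t) (r - 2))).mul
    (differentiableOn_eichlerIntegrand (r := r) hF (im_mact_neg γ ht)).continuousOn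
  rw [segInt_eq_sub_of_hasDerivAt hF ht hG (im_mact_pos _ h₁) (im_mact_pos _ h₂),
    segInt_eq_integral, ← intervalIntegral.integral_const_mul]
  simp_rw [mul_left_comm (v⁻¹ * _)]
  exact ((convex_halfSpace_im_gt 0).integral_segment_eq_sub_of_hasDerivAt hGγ hcont h₁ h₂).symm

end Transformation

theorem eichler_cocycle_and_coboundary_general
    (r : ℂ) (Γ : Subgroup (Matrix.SpecialLinearGroup (Fin 2) ℝ))
    (v : Matrix.SpecialLinearGroup (Fin 2) ℝ → ℂ)
    (hv : ∀ γ ∈ Γ, v γ ≠ 0)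
    (F : ℂ → ℂ) (hF : DifferentiableOn ℂ F {z : ℂ | 0 < z.im})
    (hauto : ∀ γ ∈ Γ, ∀ z : ℂ, 0 < z.im →
        F (mact γ z) = v γ * (mdenom γ z) ^ r * F z)
    (z₀ z₁ : ℂ) (hz₀ : 0 < z₀.im) (hz₁ : 0 < z₁.im) :
    (∀ γ ∈ Γ, ∀ δ ∈ Γ, ∀ t : ℂ, t.im < 0 →
        segInt r F (mact (γ * δ)⁻¹ z₀) z₀ t =
          (v δ)⁻¹ * cpowLHP (mdenom δ t) (r - 2) *
              segInt r F (mact γ⁻¹ z₀) z₀ (mact δ t) +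
            segInt r F (mact δ⁻¹ z₀) z₀ t) ∧
    (∀ γ ∈ Γ, ∀ t : ℂ, t.im < 0 →
        segInt r F (mact γ⁻¹ z₀) z₀ t - segInt r F (mact γ⁻¹ z₁) z₁ t =
          (v γ)⁻¹ * cpowLHP (mdenom γ t) (r - 2) * segInt r F z₀ z₁ (mact γ t) -
            segInt r F z₀ z₁ t) := by
  refine ⟨fun γ hγ δ hδ t ht => ?_, fun γ hγ t ht => ?_⟩
  · have hγz₀ := im_mact_pos γ⁻¹ hz₀
    rw [mul_inv_rev, mact_mul δ⁻¹ γ⁻¹ (mdenom_ne_zero _ hz₀.ne'),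
      ← segInt_mact_inv δ (hv δ hδ) hF (hauto δ hδ) hγz₀ hz₀ ht,
      segInt_add hF ht (im_mact_pos δ⁻¹ hγz₀) (im_mact_pos δ⁻¹ hz₀) hz₀]
  · have hγz₀ := im_mact_pos γ⁻¹ hz₀
    have hγz₁ := im_mact_pos γ⁻¹ hz₁
    rw [← segInt_mact_inv γ (hv γ hγ) hF (hauto γ hγ) hz₀ hz₁ ht,
      segInt_add hF ht hγz₀ hγz₁ hz₀, segInt_add hF ht hγz₁ hz₀ hz₁]
    ring

/-- for an automorphic form `F` (weight `r`, multiplier system `v`) the map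
`ψ_γ (t) = ∫_{γ⁻¹ z₀}^{z₀} (z-t)^(r-2) F z dz` satisfies the cocycle relation
`ψ_{γδ} = ψ_γ|_{v,2-r} δ + ψ_δ`, and changing the base point `z₀` to `z₁` changes `ψ`
by the coboundary `γ ↦ b|_{v,2-r}(γ - 1)` with `b t = ∫_{z₀}^{z₁} (z-t)^(r-2) F z dz`. -/
theorem eichler_cocycle_and_coboundary
    (r : ℂ) (Γ : Subgroup (Matrix.SpecialLinearGroup (Fin 2) ℝ))
    (v : Matrix.SpecialLinearGroup (Fin 2) ℝ → ℂ)
    (hv : ∀ γ ∈ Γ, v γ ≠ 0)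
    (hms : ∀ γ ∈ Γ, ∀ δ ∈ Γ, ∀ z : ℂ, 0 < z.im →
        v (γ * δ) * (mdenom (γ * δ) z) ^ r =
          (v γ * (mdenom γ (mact δ z)) ^ r) * (v δ * (mdenom δ z) ^ r))
    (F : ℂ → ℂ) (hF : DifferentiableOn ℂ F {z : ℂ | 0 < z.im})
    (hauto : ∀ γ ∈ Γ, ∀ z : ℂ, 0 < z.im →
        F (mact γ z) = v γ * (mdenom γ z) ^ r * F z)
    (z₀ z₁ : ℂ) (hz₀ : 0 < z₀.im) (hz₁ : 0 < z₁.im) :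
    (∀ γ ∈ Γ, ∀ δ ∈ Γ, ∀ t : ℂ, t.im < 0 →
        segInt r F (mact (γ * δ)⁻¹ z₀) z₀ t =
          (v δ)⁻¹ * cpowLHP (mdenom δ t) (r - 2) *
              segInt r F (mact γ⁻¹ z₀) z₀ (mact δ t) +
            segInt r F (mact δ⁻¹ z₀) z₀ t) ∧
    (∀ γ ∈ Γ, ∀ t : ℂ, t.im < 0 →
        segInt r F (mact γ⁻¹ z₀) z₀ t - segInt r F (mact γ⁻¹ z₁) z₁ t =
          (v γ)⁻¹ * cpowLHP (mdenom γ t) (r - 2) * segInt r F z₀ z₁ (mact γ t) -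
            segInt r F z₀ z₁ t) :=
  eichler_cocycle_and_coboundary_general r Γ v hv F hF hauto z₀ z₁ hz₀ hz₁
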